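/- Let A, B be associative conformal algebras and (▶, ◀, χ) a non-abelian 2-cocycle on B with values in A. Then the λ-product on the k[∂]-module A ⊕ B given by (a₁,b₁) λ (a₂,b₂) = (a₁ λ a₂ + b₁ ▶λ a₂ + a₁ ◀λ b₂ + χ_λ(b₁,b₂), b₁ λ b₂) defines an associative conformal algebra structure. -/

import Mathlib

structure AssocConformalAlg (k : Type*) [Field k] (A : Type*) [AddCommGroup A] [Module k A] where
  D : A →ₗ[k] A
  mul : k → A →ₗ[k] A →ₗ[k] A
  conf_left : ∀ (l : k) (a b : A), mul l (D a) b = -(l • mul l a b)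
  conf_right : ∀ (l : k) (a b : A), mul l a (D b) = D (mul l a b) + l • mul l a b
  assoc : ∀ (l m : k) (a b c : A), mul (l + m) (mul l a b) c = mul l a (mul m b c)

structure IsNonAbel2Cocycle {k : Type*} [Field k] {A B : Type*}
    [AddCommGroup A] [Module k A] [AddCommGroup B] [Module k B]
    (SA : AssocConformalAlg k A) (SB : AssocConformalAlg k B)
    (lact : k → B →ₗ[k] A →ₗ[k] A) (ract : k → A →ₗ[k] B →ₗ[k] A)
    (chi : k → B →ₗ[k] B →ₗ[k] A) : Prop where
  lact_DB : ∀ l b a, lact l (SB.D b) a = -(l • lact l b a)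
  lact_DA : ∀ l b a, lact l b (SA.D a) = SA.D (lact l b a) + l • lact l b a
  ract_DA : ∀ l a b, ract l (SA.D a) b = -(l • ract l a b)
  ract_DB : ∀ l a b, ract l a (SB.D b) = SA.D (ract l a b) + l • ract l a b
  chi_DB1 : ∀ l b1 b2, chi l (SB.D b1) b2 = -(l • chi l b1 b2)
  chi_DB2 : ∀ l b1 b2, chi l b1 (SB.D b2) = SA.D (chi l b1 b2) + l • chi l b1 b2
  coh1 : ∀ l m b1 b2 a, lact l b1 (lact m b2 a)
      = lact (l + m) (SB.mul l b1 b2) a + SA.mul (l + m) (chi l b1 b2) a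
  coh2 : ∀ l m a b1 b2, ract (l + m) (ract l a b1) b2
      = ract l a (SB.mul m b1 b2) + SA.mul l a (chi m b1 b2)
  coh3 : ∀ l m b1 a b2, lact l b1 (ract m a b2) = ract (l + m) (lact l b1 a) b2
  coh4 : ∀ l m a1 a2 b, ract (l + m) (SA.mul l a1 a2) b = SA.mul l a1 (ract m a2 b)
  coh4' : ∀ l m b a1 a2, lact l b (SA.mul m a1 a2) = SA.mul (l + m) (lact l b a1) a2
  coh4'' : ∀ l m a1 b a2, SA.mul (l + m) (ract l a1 b) a2 = SA.mul l a1 (lact m b a2)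
  coh5 : ∀ l m b1 b2 b3, lact l b1 (chi m b2 b3) + chi (l + m) b1 (SB.mul m b2 b3)
      = chi (l + m) (SB.mul l b1 b2) b3 + ract (l + m) (chi l b1 b2) b3

/-!
The new product is the usual semidirect-type product twisted by `χ`, and associativity of
`A × B` unfolds, component by component, into the associativity of `A` and `B` and the
identities (coh1)–(coh5). The only mismatch is that (coh5) is stated with
`χ_{λ+μ}(b₁, b₂ μ b₃)` where associativity produces `χ_λ(b₁, b₂ μ b₃)`. Sesquilinearity
reconciles the two: replacing `b₃` by `∂b₃` in (coh5) multiplies every term by `∂ + λ + μ`,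
except `χ_{λ+μ}(b₁, b₂ μ b₃)`, which picks up an extra `μ`. Hence
`μ χ_{λ+μ}(b₁, b₂ μ b₃) = 0`, so this term vanishes unless `μ = 0`, and in either case it
equals `χ_λ(b₁, b₂ μ b₃)`.
-/

section

variable {k : Type*} [Field k] {A B : Type*} [AddCommGroup A] [Module k A]
  [AddCommGroup B] [Module k B]

def extensionMul (SA : AssocConformalAlg k A) (SB : AssocConformalAlg k B)
    (lact : k → B →ₗ[k] A →ₗ[k] A) (ract : k → A →ₗ[k] B →ₗ[k] A)
    (chi : k → B →ₗ[k] B →ₗ[k] A) (l : k) : A × B →ₗ[k] A × B →ₗ[k] A × B :=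
  LinearMap.mk₂ k
    (fun p q => (SA.mul l p.1 q.1 + lact l p.2 q.1 + ract l p.1 q.2 + chi l p.2 q.2,
      SB.mul l p.2 q.2))
    (by intros; simp only [Prod.fst_add, Prod.snd_add, map_add, LinearMap.add_apply,
          Prod.mk_add_mk, Prod.mk.injEq, and_true]; abel)
    (by intros; simp only [Prod.smul_fst, Prod.smul_snd, map_smul, LinearMap.smul_apply,
          Prod.smul_mk, smul_add])
    (by intros; simp only [Prod.fst_add, Prod.snd_add, map_add, Prod.mk_add_mk,
          Prod.mk.injEq, and_true]; abel)
    (by intros; simp only [Prod.smul_fst, Prod.smul_snd, map_smul, Prod.smul_mk, smul_add])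

@[simp]
theorem extensionMul_apply (SA : AssocConformalAlg k A) (SB : AssocConformalAlg k B)
    (lact : k → B →ₗ[k] A →ₗ[k] A) (ract : k → A →ₗ[k] B →ₗ[k] A)
    (chi : k → B →ₗ[k] B →ₗ[k] A) (l : k) (p q : A × B) :
    extensionMul SA SB lact ract chi l p q
      = (SA.mul l p.1 q.1 + lact l p.2 q.1 + ract l p.1 q.2 + chi l p.2 q.2,
          SB.mul l p.2 q.2) :=
  rfl

namespace IsNonAbel2Cocycle

variable {SA : AssocConformalAlg k A} {SB : AssocConformalAlg k B}
  {lact : k → B →ₗ[k] A →ₗ[k] A} {ract : k → A →ₗ[k] B →ₗ[k] A}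
  {chi : k → B →ₗ[k] B →ₗ[k] A} (hc : IsNonAbel2Cocycle SA SB lact ract chi)
include hc

theorem smul_chi_mul_eq_zero (l m : k) (b₁ b₂ b₃ : B) :
    m • chi (l + m) b₁ (SB.mul m b₂ b₃) = 0 := by
  have h := hc.coh5 l m b₁ b₂ b₃
  have hD := hc.coh5 l m b₁ b₂ (SB.D b₃)
  simp only [hc.chi_DB2, SB.conf_right, hc.ract_DB, hc.lact_DA, map_add, map_smul] at hD
  have h' := congrArg SA.D h
  simp only [map_add] at h'
  linear_combination (norm := module) hD - h' - (l + m) • h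

theorem chi_add_mul (l m : k) (b₁ b₂ b₃ : B) :
    chi (l + m) b₁ (SB.mul m b₂ b₃) = chi l b₁ (SB.mul m b₂ b₃) := by
  rcases eq_or_ne m 0 with rfl | hm
  · rw [add_zero]
  · have vanish : ∀ s, chi s b₁ (SB.mul m b₂ b₃) = 0 := fun s => by
      simpa [hm] using hc.smul_chi_mul_eq_zero (s - m) m b₁ b₂ b₃
    rw [vanish, vanish]

theorem extensionMul_D_left (l : k) (p q : A × B) :
    extensionMul SA SB lact ract chi l (SA.D.prodMap SB.D p) q
      = -(l • extensionMul SA SB lact ract chi l p q) := by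
  simp only [extensionMul_apply, LinearMap.prodMap_apply, SA.conf_left, SB.conf_left,
    hc.lact_DB, hc.ract_DA, hc.chi_DB1, Prod.smul_mk, Prod.neg_mk, smul_add]
  congr 1
  abel

theorem extensionMul_D_right (l : k) (p q : A × B) :
    extensionMul SA SB lact ract chi l p (SA.D.prodMap SB.D q)
      = SA.D.prodMap SB.D (extensionMul SA SB lact ract chi l p q)
        + l • extensionMul SA SB lact ract chi l p q := by
  simp only [extensionMul_apply, LinearMap.prodMap_apply, SA.conf_right, SB.conf_right,
    hc.lact_DA, hc.ract_DB, hc.chi_DB2, Prod.smul_mk, Prod.mk_add_mk, map_add, smul_add]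
  congr 1
  abel

theorem extensionMul_assoc (l m : k) (p q r : A × B) :
    extensionMul SA SB lact ract chi (l + m) (extensionMul SA SB lact ract chi l p q) r
      = extensionMul SA SB lact ract chi l p (extensionMul SA SB lact ract chi m q r) := by
  have hchi := hc.coh5 l m p.2 q.2 r.2
  rw [hc.chi_add_mul] at hchi
  simp only [extensionMul_apply, map_add, LinearMap.add_apply, SA.assoc, SB.assoc, hc.coh1,
    hc.coh2, hc.coh3, hc.coh4, hc.coh4', hc.coh4'']
  congr 1
  linear_combination (norm := abel) -hchi

def extension : AssocConformalAlg k (A × B) where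
  D := SA.D.prodMap SB.D
  mul := extensionMul SA SB lact ract chi
  conf_left := hc.extensionMul_D_left
  conf_right := hc.extensionMul_D_right
  assoc := hc.extensionMul_assoc

end IsNonAbel2Cocycle

end

theorem stmt_10 (k : Type*) [Field k]
    (A B : Type*) [AddCommGroup A] [Module k A] [AddCommGroup B] [Module k B]
    (SA : AssocConformalAlg k A) (SB : AssocConformalAlg k B)
    (lact : k → B →ₗ[k] A →ₗ[k] A) (ract : k → A →ₗ[k] B →ₗ[k] A)
    (chi : k → B →ₗ[k] B →ₗ[k] A)
    (hc : IsNonAbel2Cocycle SA SB lact ract chi) :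
    ∃ S : AssocConformalAlg k (A × B),
      (∀ p : A × B, S.D p = (SA.D p.1, SB.D p.2)) ∧
      (∀ (l : k) (p q : A × B),
        S.mul l p q
          = (SA.mul l p.1 q.1 + lact l p.2 q.1 + ract l p.1 q.2 + chi l p.2 q.2,
             SB.mul l p.2 q.2)) :=
  ⟨hc.extension, fun _ => rfl, fun _ _ _ => rfl⟩
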